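/- For every odd natural number k ≥ 1 and every real x ∈ [-1,1], one has |(-1)^{(k+1)/2} · (π^{k+1}/2) · F_k(x) − cos(πx)| ≤ ∑_{n=2}^∞ 1/n^{k+1}; in particular the n = 1 cosine term dominates the Fourier expansion of F_k for large k. -/

import Mathlib

open Polynomial Real
open scoped Nat

lemma bf_one (y : ℝ) : bernoulliFun 1 y = y - 1/2 := by
  rw [bernoulliFun]
  simp [Polynomial.bernoulli, Finset.sum_range_succ]
  norm_num [_root_.bernoulli_one]
  ring

lemma hasDerivAt_bf (m : ℕ) (y : ℝ) :
    HasDerivAt (fun x : ℝ => bernoulliFun (m+1) ((x+1)/2)) ((m+1) * bernoulliFun m ((y+1)/2) / 2) y := by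
  have h1 : HasDerivAt (fun x : ℝ => (x+1)/2) (1/2) y := by
    simpa using ((hasDerivAt_id y).add_const 1).div_const 2
  have h2 := (hasDerivAt_bernoulliFun (m+1) ((y+1)/2)).comp y h1
  refine h2.congr_deriv ?_
  push_cast
  ring

lemma cont_bf (m : ℕ) : Continuous (fun x : ℝ => bernoulliFun m ((x+1)/2)) := by
  exact (Polynomial.continuous _).comp (by continuity)

lemma key (F : ℕ → Polynomial ℝ)
    (hF0 : F 0 = Polynomial.X)
    (hFd : ∀ k : ℕ, Polynomial.derivative (F (k + 1)) = F k)
    (hFi : ∀ k : ℕ, ∫ x in (-1 : ℝ)..1, (F (k + 1)).eval x = 0) :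
    ∀ k x, (F k).eval x = 2^(k+1)/(k+1)! * bernoulliFun (k+1) ((x+1)/2) := by
  intro k
  induction k with
  | zero =>
    intro x
    rw [hF0, bf_one]
    norm_num
    ring
  | succ k ih =>
    set a : ℝ := 2^(k+2)/(k+2)! with ha
    have hfact : ((k+2)! : ℝ) = (k+2) * (k+1)! := by
      push_cast [Nat.factorial_succ]; ring
    have hderiv : ∀ y : ℝ, HasDerivAt (fun x => a * bernoulliFun (k+2) ((x+1)/2)) ((F k).eval y) y := by
      intro y
      have h := (hasDerivAt_bf (k+1) y).const_mul a
      refine h.congr_deriv ?_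
      rw [ih y, ha, hfact]
      have h1 : ((k+1)! : ℝ) ≠ 0 := by positivity
      have h2 : ((k:ℝ)+2) ≠ 0 := by positivity
      field_simp
      push_cast
      ring
    have hFun : ∀ y : ℝ, HasDerivAt (fun x => (F (k+1)).eval x) ((F k).eval y) y := by
      intro y
      have := (F (k+1)).hasDerivAt y
      rwa [hFd k] at this
    have hdiff : ∀ y : ℝ, HasDerivAt
        (fun x => (F (k+1)).eval x - a * bernoulliFun (k+2) ((x+1)/2)) 0 y := by
      intro y
      have := (hFun y).sub (hderiv y)
      simp only [sub_self] at this
      exact this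
    set c : ℝ := (F (k+1)).eval 0 - a * bernoulliFun (k+2) ((0+1)/2) with hc
    have hconst : ∀ x : ℝ, (F (k+1)).eval x = a * bernoulliFun (k+2) ((x+1)/2) + c := by
      intro x
      have := is_const_of_deriv_eq_zero (f := fun x => (F (k+1)).eval x - a * bernoulliFun (k+2) ((x+1)/2))
        (fun z => (hdiff z).differentiableAt) (fun z => (hdiff z).deriv) x 0
      rw [hc]
      linarith [this]
    -- integral of the bernoulli part is zero
    have hB : (∫ x in (-1:ℝ)..1, a * bernoulliFun (k+2) ((x+1)/2)) = 0 := by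
      have anti : ∀ y ∈ Set.uIcc (-1:ℝ) 1, HasDerivAt
          (fun x => a * (2/(k+3)) * bernoulliFun (k+3) ((x+1)/2))
          (a * bernoulliFun (k+2) ((y+1)/2)) y := by
        intro y _
        have h := (hasDerivAt_bf (k+2) y).const_mul (a * (2/((k:ℝ)+3)))
        refine h.congr_deriv ?_
        have h2 : ((k:ℝ)+3) ≠ 0 := by positivity
        push_cast
        field_simp
        ring
      rw [intervalIntegral.integral_eq_sub_of_hasDerivAt anti
        ((continuous_const.mul (cont_bf (k+2))).intervalIntegrable _ _)]
      norm_num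
      rw [bernoulliFun_endpoints_eq_of_ne_one (by omega : k + 3 ≠ 1)]
      ring
    have hInt : (∫ x in (-1:ℝ)..1, (F (k+1)).eval x)
        = (∫ x in (-1:ℝ)..1, a * bernoulliFun (k+2) ((x+1)/2)) + ∫ x in (-1:ℝ)..1, c := by
      rw [← intervalIntegral.integral_add (f := fun x => a * bernoulliFun (k+2) ((x+1)/2)) (g := fun _ => c)
        ((continuous_const.mul (cont_bf (k+2))).intervalIntegrable _ _)
        (intervalIntegrable_const)]
      exact intervalIntegral.integral_congr (fun x _ => hconst x)
    rw [hFi k, hB, intervalIntegral.integral_const] at hInt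
    have hc0 : c = 0 := by
      simp at hInt
      linarith
    intro x
    rw [hconst x, hc0]
    norm_num

/-- Let `F 0 = X` and, inductively, `F (k+1)` be the unique polynomial
with derivative `F k` and mean zero on `[-1,1]`.  For every odd `k ≥ 1` and every
`x ∈ [-1,1]`, `|(-1)^{(k+1)/2} (π^{k+1}/2) F k (x) − cos(πx)| ≤ ∑_{n=2}^∞ 1/n^{k+1}`;
the `n = 1` cosine term dominates the Fourier expansion of `F k` for large `k`. -/
theorem stmt8 (F : ℕ → Polynomial ℝ)
    (hF0 : F 0 = Polynomial.X)
    (hFd : ∀ k : ℕ, Polynomial.derivative (F (k + 1)) = F k)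
    (hFi : ∀ k : ℕ, ∫ x in (-1 : ℝ)..1, (F (k + 1)).eval x = 0)
    (k : ℕ) (hk : Odd k) (hk1 : 1 ≤ k) (x : ℝ) (hx : x ∈ Set.Icc (-1 : ℝ) 1) :
    |(-1 : ℝ) ^ ((k + 1) / 2) * (Real.pi ^ (k + 1) / 2) * (F k).eval x - Real.cos (Real.pi * x)|
      ≤ ∑' n : ℕ, (1 : ℝ) / (n + 2) ^ (k + 1) := by
  obtain ⟨j, hj⟩ := hk
  have hx2 : (x+1)/2 ∈ Set.Icc (0:ℝ) 1 := ⟨by linarith [hx.1], by linarith [hx.2]⟩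
  set T : ℝ := (-1 : ℝ) ^ ((k + 1) / 2) * (Real.pi ^ (k + 1) / 2) * (F k).eval x with hT
  have H := hasSum_one_div_nat_pow_mul_cos (k := j+1) (by omega) hx2
  have hekk : 2 * (j + 1) = k + 1 := by omega
  have hjk : (k + 1) / 2 = j + 1 := by omega
  rw [hekk] at H
  -- identify the sum value with -T
  have hBval : (Polynomial.map (algebraMap ℚ ℝ) (Polynomial.bernoulli (k+1))).eval ((x+1)/2)
      = bernoulliFun (k+1) ((x+1)/2) := rfl
  have hval : (-1 : ℝ) ^ (j + 1 + 1) * (2 * π) ^ (k+1) / 2 / (k+1)! *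
      (Polynomial.map (algebraMap ℚ ℝ) (Polynomial.bernoulli (k+1))).eval ((x+1)/2) = -T := by
    rw [hBval, hT, hjk, key F hF0 hFd hFi k x]
    have h1 : ((k+1)! : ℝ) ≠ 0 := by positivity
    rw [mul_pow]
    rw [pow_succ (-1:ℝ) (j+1)]
    field_simp
  rw [hval] at H
  set f : ℕ → ℝ := fun n : ℕ => 1 / (n : ℝ) ^ (k+1) * Real.cos (2 * π * n * ((x+1)/2)) with hf
  have hfe : ∀ n : ℕ, f n = (-1:ℝ)^n * Real.cos (π * x * n) / (n:ℝ)^(k+1) := by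
    intro n
    have harg : 2 * π * n * ((x+1)/2) = π * x * n + n * π := by ring
    rw [hf]
    simp only
    rw [harg, Real.cos_add_nat_mul_pi]
    ring
  have hsum2 : (-T - (f 0 + f 1)) + ∑ i ∈ Finset.range 2, f i = -T := by
    rw [Finset.sum_range_succ, Finset.sum_range_one]
    ring
  have H2 : HasSum (fun n => f (n + 2)) (-T - (f 0 + f 1)) :=
    (hasSum_nat_add_iff 2).2 (by rw [hsum2]; exact H)
  have hf0 : f 0 = 0 := by
    rw [hfe]
    simp [zero_pow (by omega : k + 1 ≠ 0)]
  have hf1 : f 1 = -Real.cos (π * x) := by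
    rw [hfe]
    norm_num
  rw [hf0, hf1] at H2
  have hval2 : -T - (0 + -Real.cos (π * x)) = -(T - Real.cos (π * x)) := by ring
  rw [hval2] at H2
  -- bounds
  have hb : ∀ n : ℕ, |f (n + 2)| ≤ 1 / ((n:ℝ) + 2) ^ (k+1) := by
    intro n
    rw [hfe]
    push_cast
    rw [abs_div, abs_mul, abs_pow, abs_neg, abs_one, one_pow, one_mul,
      abs_of_nonneg (by positivity : (0:ℝ) ≤ ((n:ℝ)+2)^(k+1))]
    gcongr
    exact Real.abs_cos_le_one _
  have hsumb : Summable (fun n : ℕ => 1 / ((n:ℝ) + 2) ^ (k+1)) := by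
    have h0 : Summable (fun n : ℕ => 1 / (n:ℝ) ^ (k+1)) :=
      Real.summable_one_div_nat_pow.mpr (by omega)
    have h1 := (summable_nat_add_iff 2).2 h0
    refine h1.congr (fun n => ?_)
    push_cast
    ring
  have habs : Summable (fun n => |f (n + 2)|) :=
    Summable.of_nonneg_of_le (fun n => abs_nonneg _) hb hsumb
  calc |T - Real.cos (π * x)| = |∑' n : ℕ, f (n + 2)| := by
        rw [H2.tsum_eq, abs_neg]
    _ ≤ ∑' n : ℕ, |f (n + 2)| := by
        have h := norm_tsum_le_tsum_norm (f := fun n => f (n + 2))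
          (by simpa only [Real.norm_eq_abs] using habs)
        simpa only [Real.norm_eq_abs] using h
    _ ≤ ∑' n : ℕ, 1 / ((n:ℝ) + 2) ^ (k+1) := Summable.tsum_le_tsum hb habs hsumb
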